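/- arXiv:2204.03308 — 3 statements merged into one kernel-verified Lean document; each statement's English description precedes it below -/
import Mathlib

section
/- Let G be a connected r-regular finite simple graph on n ≥ 2 vertices, let λ₁ be the largest eigenvalue of the adjacency matrix M different from r (i.e., λ₁ is an eigenvalue, λ₁ < r, and every eigenvalue μ ≠ r satisfies μ ≤ λ₁), and let λ_k be the smallest eigenvalue of M. Then for every nonempty proper subset A ⊆ V with B = V∖A: (r−λ₁)|A||B|/n ≤ e(A,B) ≤ (r−λ_k)|A||B|/n. Moreover, the lower bound is attained if and only if {A,B} is an equitable partition with eigenvalue λ₁, and the upper bound is attained if and only if {A,B} is an equitable partition with eigenvalue λ_k. -/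
/-!
The cut vector `f = |B| • 1_A - |A| • 1_B` sums to zero, so it is orthogonal to the
`r`-eigenspace of `M`, which consists of the constant vectors because `G` is connected and
`r`-regular. Expanding `f` in an orthonormal eigenbasis gives the Rayleigh bounds
`λ_k ⟪f, f⟫ ≤ ⟪f, M f⟫ ≤ λ₁ ⟪f, f⟫`, with equality exactly when `M f = λ f`. Writing
`M = r - L` with `L` the Laplacian, `⟪f, f⟫ = |A| |B| n` and `⟪f, L f⟫ = n² e(A, B)` turn
these into the two cut bounds, and `M f = λ f` says precisely that every vertex of `A` has
`|B| (r - λ) / n` neighbours in `B` and every vertex of `B` has `|A| (r - λ) / n` in `A`.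
-/

open Finset Matrix
open scoped Classical InnerProductSpace

namespace LinearMap.IsSymmetric

variable {E : Type*} [NormedAddCommGroup E] [InnerProductSpace ℝ E] [FiniteDimensional ℝ E]
  {T : E →ₗ[ℝ] E}

theorem inner_apply_self_eq_sum (hT : T.IsSymmetric) (x : E) :
    ⟪T x, x⟫_ℝ = ∑ i, hT.eigenvalues rfl i * ⟪hT.eigenvectorBasis rfl i, x⟫_ℝ ^ 2 := by
  rw [← (hT.eigenvectorBasis rfl).sum_inner_mul_inner]
  refine sum_congr rfl fun i _ => ?_
  rw [hT, apply_eigenvectorBasis, RCLike.ofReal_real_eq_id, id_eq, real_inner_smul_right,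
    real_inner_comm x]
  ring

theorem mul_inner_self_sub_inner_apply_self (hT : T.IsSymmetric) (lam : ℝ) (x : E) :
    lam * ⟪x, x⟫_ℝ - ⟪T x, x⟫_ℝ =
      ∑ i, (lam - hT.eigenvalues rfl i) * ⟪hT.eigenvectorBasis rfl i, x⟫_ℝ ^ 2 := by
  rw [hT.inner_apply_self_eq_sum, ← (hT.eigenvectorBasis rfl).sum_inner_mul_inner, mul_sum,
    ← sum_sub_distrib]
  refine sum_congr rfl fun i _ => ?_
  rw [real_inner_comm x]
  ring

variable {lam : ℝ} {x : E}

theorem mul_sq_inner_eigenvectorBasis_nonneg (hT : T.IsSymmetric)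
    (hx : ∀ μ y, T y = μ • y → lam < μ → ⟪y, x⟫_ℝ = 0) (i : Fin (Module.finrank ℝ E)) :
    0 ≤ (lam - hT.eigenvalues rfl i) * ⟪hT.eigenvectorBasis rfl i, x⟫_ℝ ^ 2 := by
  rcases le_or_gt (hT.eigenvalues rfl i) lam with hi | hi
  · exact mul_nonneg (sub_nonneg.2 hi) (sq_nonneg _)
  · rw [hx _ _ (hT.apply_eigenvectorBasis rfl i) hi]
    simp

theorem inner_apply_self_le (hT : T.IsSymmetric)
    (hx : ∀ μ y, T y = μ • y → lam < μ → ⟪y, x⟫_ℝ = 0) :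
    ⟪T x, x⟫_ℝ ≤ lam * ⟪x, x⟫_ℝ := by
  rw [← sub_nonneg, hT.mul_inner_self_sub_inner_apply_self]
  exact sum_nonneg fun i _ => hT.mul_sq_inner_eigenvectorBasis_nonneg hx i

theorem inner_apply_self_eq_iff (hT : T.IsSymmetric)
    (hx : ∀ μ y, T y = μ • y → lam < μ → ⟪y, x⟫_ℝ = 0) :
    ⟪T x, x⟫_ℝ = lam * ⟪x, x⟫_ℝ ↔ T x = lam • x := by
  refine ⟨fun h => ?_, fun h => by rw [h, real_inner_smul_left]⟩
  rw [eq_comm, ← sub_eq_zero, hT.mul_inner_self_sub_inner_apply_self,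
    sum_eq_zero_iff_of_nonneg fun i _ => hT.mul_sq_inner_eigenvectorBasis_nonneg hx i] at h
  refine InnerProductSpace.ext_inner_left_basis (hT.eigenvectorBasis rfl).toBasis fun i => ?_
  have hi : (lam - hT.eigenvalues rfl i) * ⟪hT.eigenvectorBasis rfl i, x⟫_ℝ = 0 := by
    simpa [sq, ← mul_assoc] using h i (mem_univ i)
  simp only [OrthonormalBasis.coe_toBasis, real_inner_smul_right]
  rw [← hT, apply_eigenvectorBasis, RCLike.ofReal_real_eq_id, id_eq, real_inner_smul_left]
  linear_combination -hi

end LinearMap.IsSymmetric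

namespace Matrix

variable {V : Type*} [Fintype V] {M : Matrix V V ℝ} {lam : ℝ} {f : V → ℝ}

theorem inner_toEuclideanLin_eq_zero
    (hf : ∀ μ g, M *ᵥ g = μ • g → lam < μ → g ⬝ᵥ f = 0) (μ : ℝ) (y : EuclideanSpace ℝ V)
    (hy : M.toEuclideanLin y = μ • y) (hμ : lam < μ) : ⟪y, WithLp.toLp 2 f⟫_ℝ = 0 := by
  rw [EuclideanSpace.inner_eq_star_dotProduct, star_trivial, dotProduct_comm]
  exact hf μ y.ofLp (congrArg WithLp.ofLp hy) hμ

namespace IsHermitian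

theorem dotProduct_mulVec_le (hM : M.IsHermitian)
    (hf : ∀ μ g, M *ᵥ g = μ • g → lam < μ → g ⬝ᵥ f = 0) :
    f ⬝ᵥ M *ᵥ f ≤ lam * (f ⬝ᵥ f) := by
  have := (isSymmetric_toEuclideanLin_iff.2 hM).inner_apply_self_le
    (inner_toEuclideanLin_eq_zero hf)
  simpa only [toLpLin_toLp, EuclideanSpace.inner_toLp_toLp, star_trivial, toLin'_apply,
    dotProduct_comm f] using this

theorem dotProduct_mulVec_eq_iff (hM : M.IsHermitian)
    (hf : ∀ μ g, M *ᵥ g = μ • g → lam < μ → g ⬝ᵥ f = 0) :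
    f ⬝ᵥ M *ᵥ f = lam * (f ⬝ᵥ f) ↔ M *ᵥ f = lam • f := by
  have := (isSymmetric_toEuclideanLin_iff.2 hM).inner_apply_self_eq_iff
    (inner_toEuclideanLin_eq_zero hf)
  simpa only [toLpLin_toLp, EuclideanSpace.inner_toLp_toLp, star_trivial, toLin'_apply,
    dotProduct_comm f, ← WithLp.toLp_smul, (WithLp.toLp_injective 2).eq_iff] using this

theorem le_dotProduct_mulVec (hM : M.IsHermitian)
    (hf : ∀ μ g, M *ᵥ g = μ • g → μ < lam → g ⬝ᵥ f = 0) :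
    lam * (f ⬝ᵥ f) ≤ f ⬝ᵥ M *ᵥ f := by
  have := hM.neg.dotProduct_mulVec_le (lam := -lam) fun μ g hg hμ =>
    hf (-μ) g (by rw [neg_smul, ← hg, neg_mulVec, neg_neg]) (by linarith)
  rwa [neg_mulVec, dotProduct_neg, neg_mul, neg_le_neg_iff] at this

theorem eq_dotProduct_mulVec_iff (hM : M.IsHermitian)
    (hf : ∀ μ g, M *ᵥ g = μ • g → μ < lam → g ⬝ᵥ f = 0) :
    f ⬝ᵥ M *ᵥ f = lam * (f ⬝ᵥ f) ↔ M *ᵥ f = lam • f := by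
  have := hM.neg.dotProduct_mulVec_eq_iff (lam := -lam) fun μ g hg hμ =>
    hf (-μ) g (by rw [neg_smul, ← hg, neg_mulVec, neg_neg]) (by linarith)
  rwa [neg_mulVec, dotProduct_neg, neg_mul, neg_inj, neg_smul, neg_inj] at this

end IsHermitian

end Matrix

noncomputable def cutVector {V : Type*} [Fintype V] (A : Finset V) : V → ℝ :=
  fun x => if x ∈ A then (#Aᶜ : ℝ) else -(#A : ℝ)

section CutVector

variable {V : Type*} [Fintype V] (A : Finset V)

theorem sum_cutVector_mul (h : V → ℝ) :
    ∑ x, cutVector A x * h x = #Aᶜ * ∑ x ∈ A, h x - #A * ∑ x ∈ Aᶜ, h x := by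
  rw [← sum_add_sum_compl A, mul_sum, mul_sum, sub_eq_add_neg, ← sum_neg_distrib]
  congr 1 <;> refine sum_congr rfl fun x hx => ?_
  · rw [cutVector, if_pos hx]
  · rw [cutVector, if_neg (mem_compl.1 hx), neg_mul]

theorem const_dotProduct_cutVector (c : ℝ) : (fun _ => c) ⬝ᵥ cutVector A = 0 := by
  rw [dotProduct_comm, dotProduct, sum_cutVector_mul]
  simp only [sum_const, nsmul_eq_mul]
  ring

theorem cutVector_dotProduct_cutVector :
    cutVector A ⬝ᵥ cutVector A = #A * #Aᶜ * Fintype.card V := by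
  rw [dotProduct, sum_cutVector_mul, ← card_add_card_compl A]
  have hA : ∀ x ∈ A, cutVector A x = #Aᶜ := fun x hx => if_pos hx
  have hAc : ∀ x ∈ Aᶜ, cutVector A x = -#A := fun x hx => if_neg (mem_compl.1 hx)
  rw [sum_congr rfl hA, sum_congr rfl hAc]
  simp only [sum_const, nsmul_eq_mul]
  push_cast
  ring

end CutVector

namespace SimpleGraph

variable {V : Type*} (G : SimpleGraph V) [DecidableRel G.Adj]

theorem sum_card_filter_adj_comm (s t : Finset V) :
    ∑ x ∈ s, #{y ∈ t | G.Adj x y} = ∑ y ∈ t, #{x ∈ s | G.Adj y x} := by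
  refine (sum_card_bipartiteAbove_eq_sum_card_bipartiteBelow G.Adj).trans ?_
  simp_rw [bipartiteBelow, G.adj_comm]

variable [Fintype V]

theorem card_filter_adj_add_card_filter_adj_compl (A : Finset V) (x : V) :
    #{y ∈ A | G.Adj x y} + #{y ∈ Aᶜ | G.Adj x y} = G.degree x := by
  rw [← card_union_of_disjoint (disjoint_filter_filter disjoint_compl_right), ← filter_union,
    union_compl, ← neighborFinset_eq_filter, card_neighborFinset_eq_degree]

theorem sum_neighborFinset_cutVector (A : Finset V) (x : V) :
    ∑ y ∈ G.neighborFinset x, cutVector A y =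
      #Aᶜ * #{y ∈ A | G.Adj x y} - #A * #{y ∈ Aᶜ | G.Adj x y} := by
  have hA : {y ∈ G.neighborFinset x | y ∈ A} = {y ∈ A | G.Adj x y} := by
    ext; simp [and_comm]
  have hAc : {y ∈ G.neighborFinset x | y ∉ A} = {y ∈ Aᶜ | G.Adj x y} := by
    ext; simp [and_comm]
  unfold cutVector
  rw [sum_ite, hA, hAc, sum_const, sum_const, nsmul_eq_mul, nsmul_eq_mul]
  ring

theorem lapMatrix_mulVec_cutVector_of_mem {A : Finset V} {x : V} (hx : x ∈ A) :
    (G.lapMatrix ℝ *ᵥ cutVector A) x = Fintype.card V * #{y ∈ Aᶜ | G.Adj x y} := by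
  rw [lapMatrix_mulVec_apply, sum_neighborFinset_cutVector,
    ← card_filter_adj_add_card_filter_adj_compl G A x, cutVector, if_pos hx,
    ← card_add_card_compl A]
  push_cast
  ring

theorem lapMatrix_mulVec_cutVector_of_notMem {A : Finset V} {x : V} (hx : x ∉ A) :
    (G.lapMatrix ℝ *ᵥ cutVector A) x = -(Fintype.card V * #{y ∈ A | G.Adj x y}) := by
  rw [lapMatrix_mulVec_apply, sum_neighborFinset_cutVector,
    ← card_filter_adj_add_card_filter_adj_compl G A x, cutVector, if_neg hx,
    ← card_add_card_compl A]
  push_cast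
  ring

theorem cutVector_dotProduct_lapMatrix_mulVec (A : Finset V) :
    cutVector A ⬝ᵥ G.lapMatrix ℝ *ᵥ cutVector A =
      Fintype.card V ^ 2 * ∑ x ∈ A, (#{y ∈ Aᶜ | G.Adj x y} : ℝ) := by
  have hsymm :
      ∑ x ∈ Aᶜ, (#{y ∈ A | G.Adj x y} : ℝ) = ∑ x ∈ A, (#{y ∈ Aᶜ | G.Adj x y} : ℝ) := by
    exact_mod_cast (G.sum_card_filter_adj_comm A Aᶜ).symm
  rw [dotProduct, sum_cutVector_mul,
    sum_congr rfl fun x hx => G.lapMatrix_mulVec_cutVector_of_mem hx,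
    sum_congr rfl fun x hx => G.lapMatrix_mulVec_cutVector_of_notMem (mem_compl.1 hx),
    sum_neg_distrib, ← mul_sum, ← mul_sum, hsymm, ← card_add_card_compl A]
  push_cast
  ring

theorem lapMatrix_mulVec_cutVector_eq_smul_iff (A : Finset V) (μ : ℝ) :
    G.lapMatrix ℝ *ᵥ cutVector A = μ • cutVector A ↔
      (∀ x ∈ A, Fintype.card V * (#{y ∈ Aᶜ | G.Adj x y} : ℝ) = μ * #Aᶜ) ∧
      ∀ x ∈ Aᶜ, Fintype.card V * (#{y ∈ A | G.Adj x y} : ℝ) = μ * #A := by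
  simp only [funext_iff, Pi.smul_apply, smul_eq_mul, mem_compl]
  refine ⟨fun h => ⟨fun x hx => ?_, fun x hx => ?_⟩, fun ⟨hA, hAc⟩ x => ?_⟩
  · rw [← G.lapMatrix_mulVec_cutVector_of_mem hx, h, cutVector, if_pos hx]
  · rw [← neg_inj, ← G.lapMatrix_mulVec_cutVector_of_notMem hx, h, cutVector, if_neg hx,
      mul_neg]
  · by_cases hx : x ∈ A
    · rw [G.lapMatrix_mulVec_cutVector_of_mem hx, hA x hx, cutVector, if_pos hx]
    · rw [G.lapMatrix_mulVec_cutVector_of_notMem hx, hAc x hx, cutVector, if_neg hx, mul_neg]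

def IsEquitableWithEigenvalue (r : ℕ) (A : Finset V) (lam : ℝ) : Prop :=
  ∃ q11 q12 q21 q22 : ℝ,
    (∀ x ∈ A, (#{y ∈ A | G.Adj x y} : ℝ) = q11 ∧ (#{y ∈ Aᶜ | G.Adj x y} : ℝ) = q12) ∧
    (∀ x ∈ Aᶜ, (#{y ∈ A | G.Adj x y} : ℝ) = q21 ∧ (#{y ∈ Aᶜ | G.Adj x y} : ℝ) = q22) ∧
    q11 + q22 - (r : ℝ) = lam

namespace IsRegularOfDegree

variable {G} {r : ℕ}

theorem card_filter_adj_add_card_filter_adj_compl (hreg : G.IsRegularOfDegree r)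
    (A : Finset V) (x : V) :
    (#{y ∈ A | G.Adj x y} : ℝ) + #{y ∈ Aᶜ | G.Adj x y} = r := by
  rw [← hreg x]
  exact_mod_cast G.card_filter_adj_add_card_filter_adj_compl A x

theorem adjMatrix_mulVec (hreg : G.IsRegularOfDegree r) (g : V → ℝ) :
    G.adjMatrix ℝ *ᵥ g = (r : ℝ) • g - G.lapMatrix ℝ *ᵥ g := by
  ext v
  rw [Pi.sub_apply, lapMatrix_mulVec_apply, hreg v, adjMatrix_mulVec_apply, Pi.smul_apply,
    smul_eq_mul, sub_sub_cancel]

theorem adjMatrix_mulVec_eq_smul_iff_forall_reachable (hreg : G.IsRegularOfDegree r)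
    {g : V → ℝ} :
    G.adjMatrix ℝ *ᵥ g = (r : ℝ) • g ↔ ∀ i j, G.Reachable i j → g i = g j := by
  rw [hreg.adjMatrix_mulVec, sub_eq_self, lapMatrix_mulVec_eq_zero_iff_forall_reachable]

theorem card_mul_card_filter_adj_of_isEquitableWithEigenvalue (hreg : G.IsRegularOfDegree r)
    {A : Finset V} (hA : A.Nonempty) (hAc : Aᶜ.Nonempty) {lam : ℝ}
    (h : G.IsEquitableWithEigenvalue r A lam) :
    (∀ x ∈ A, Fintype.card V * (#{y ∈ Aᶜ | G.Adj x y} : ℝ) = (r - lam) * #Aᶜ) ∧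
      ∀ x ∈ Aᶜ, Fintype.card V * (#{y ∈ A | G.Adj x y} : ℝ) = (r - lam) * #A := by
  obtain ⟨q11, q12, q21, q22, hqA, hqAc, hq⟩ := h
  obtain ⟨xa, hxa⟩ := hA
  obtain ⟨xb, hxb⟩ := hAc
  have h1 : q11 + q12 = r := by
    rw [← (hqA xa hxa).1, ← (hqA xa hxa).2, hreg.card_filter_adj_add_card_filter_adj_compl]
  have h2 : q21 + q22 = r := by
    rw [← (hqAc xb hxb).1, ← (hqAc xb hxb).2, hreg.card_filter_adj_add_card_filter_adj_compl]
  have hcount : (#A : ℝ) * q12 = #Aᶜ * q21 := by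
    have : ∑ x ∈ A, (#{y ∈ Aᶜ | G.Adj x y} : ℝ) = ∑ x ∈ Aᶜ, (#{y ∈ A | G.Adj x y} : ℝ) := by
      exact_mod_cast G.sum_card_filter_adj_comm A Aᶜ
    rwa [sum_congr rfl fun x hx => (hqA x hx).2, sum_congr rfl fun x hx => (hqAc x hx).1,
      sum_const, sum_const, nsmul_eq_mul, nsmul_eq_mul] at this
  have hn : (Fintype.card V : ℝ) = #A + #Aᶜ := by exact_mod_cast (card_add_card_compl A).symm
  refine ⟨fun x hx => ?_, fun x hx => ?_⟩
  · rw [(hqA x hx).2, hn]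
    linear_combination hcount + (#Aᶜ : ℝ) * (h1 + h2 - hq)
  · rw [(hqAc x hx).1, hn]
    linear_combination -hcount + (#A : ℝ) * (h1 + h2 - hq)

theorem isEquitableWithEigenvalue_of_card_mul_card_filter_adj [Nonempty V]
    (hreg : G.IsRegularOfDegree r) {A : Finset V} {lam : ℝ}
    (hA : ∀ x ∈ A, Fintype.card V * (#{y ∈ Aᶜ | G.Adj x y} : ℝ) = (r - lam) * #Aᶜ)
    (hAc : ∀ x ∈ Aᶜ, Fintype.card V * (#{y ∈ A | G.Adj x y} : ℝ) = (r - lam) * #A) :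
    G.IsEquitableWithEigenvalue r A lam := by
  have hn : (Fintype.card V : ℝ) ≠ 0 := by exact_mod_cast Fintype.card_ne_zero
  refine ⟨r - (r - lam) * #Aᶜ / Fintype.card V, (r - lam) * #Aᶜ / Fintype.card V,
    (r - lam) * #A / Fintype.card V, r - (r - lam) * #A / Fintype.card V,
    fun x hx => ?_, fun x hx => ?_, ?_⟩
  · have hout : (#{y ∈ Aᶜ | G.Adj x y} : ℝ) = (r - lam) * #Aᶜ / Fintype.card V := by
      rw [eq_div_iff hn, mul_comm, hA x hx]
    refine ⟨?_, hout⟩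
    rw [← hout, ← hreg.card_filter_adj_add_card_filter_adj_compl A x, add_sub_cancel_right]
  · have hout : (#{y ∈ A | G.Adj x y} : ℝ) = (r - lam) * #A / Fintype.card V := by
      rw [eq_div_iff hn, mul_comm, hAc x hx]
    refine ⟨hout, ?_⟩
    rw [← hout, ← hreg.card_filter_adj_add_card_filter_adj_compl A x, add_sub_cancel_left]
  · field_simp
    rw [← card_add_card_compl A, Nat.cast_add]
    ring

theorem isEquitableWithEigenvalue_iff (hreg : G.IsRegularOfDegree r) {A : Finset V}
    (hA : A.Nonempty) (hAc : Aᶜ.Nonempty) (lam : ℝ) :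
    G.IsEquitableWithEigenvalue r A lam ↔
      (∀ x ∈ A, Fintype.card V * (#{y ∈ Aᶜ | G.Adj x y} : ℝ) = (r - lam) * #Aᶜ) ∧
      ∀ x ∈ Aᶜ, Fintype.card V * (#{y ∈ A | G.Adj x y} : ℝ) = (r - lam) * #A :=
  have := hA.to_type
  ⟨hreg.card_mul_card_filter_adj_of_isEquitableWithEigenvalue hA hAc,
    fun h => hreg.isEquitableWithEigenvalue_of_card_mul_card_filter_adj h.1 h.2⟩

theorem adjMatrix_mulVec_cutVector_eq_smul_iff (hreg : G.IsRegularOfDegree r) {A : Finset V}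
    (hA : A.Nonempty) (hAc : Aᶜ.Nonempty) (lam : ℝ) :
    G.adjMatrix ℝ *ᵥ cutVector A = lam • cutVector A ↔
      G.IsEquitableWithEigenvalue r A lam := by
  rw [hreg.isEquitableWithEigenvalue_iff hA hAc, ← lapMatrix_mulVec_cutVector_eq_smul_iff,
    hreg.adjMatrix_mulVec, sub_eq_iff_comm, sub_smul, eq_comm]

theorem cutVector_dotProduct_adjMatrix_mulVec (hreg : G.IsRegularOfDegree r) (A : Finset V) :
    cutVector A ⬝ᵥ G.adjMatrix ℝ *ᵥ cutVector A =
      r * (#A * #Aᶜ * Fintype.card V) -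
        Fintype.card V ^ 2 * ∑ x ∈ A, (#{y ∈ Aᶜ | G.Adj x y} : ℝ) := by
  rw [hreg.adjMatrix_mulVec, dotProduct_sub, dotProduct_smul, cutVector_dotProduct_cutVector,
    cutVector_dotProduct_lapMatrix_mulVec, smul_eq_mul]

theorem dotProduct_cutVector_eq_zero (hreg : G.IsRegularOfDegree r) (hconn : G.Connected)
    (A : Finset V) {g : V → ℝ} (hg : G.adjMatrix ℝ *ᵥ g = (r : ℝ) • g) :
    g ⬝ᵥ cutVector A = 0 := by
  obtain ⟨x₀⟩ := hconn.nonempty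
  have hconst : g = fun _ => g x₀ := funext fun x =>
    hreg.adjMatrix_mulVec_eq_smul_iff_forall_reachable.1 hg x x₀ (hconn.preconnected x x₀)
  rw [hconst]
  exact const_dotProduct_cutVector A (g x₀)

variable [Nonempty V]

theorem cutVector_dotProduct_adjMatrix_mulVec_le_iff (hreg : G.IsRegularOfDegree r)
    (A : Finset V) (lam : ℝ) :
    cutVector A ⬝ᵥ G.adjMatrix ℝ *ᵥ cutVector A ≤ lam * (cutVector A ⬝ᵥ cutVector A) ↔
      (r - lam) * #A * #Aᶜ / Fintype.card V ≤ ∑ x ∈ A, (#{y ∈ Aᶜ | G.Adj x y} : ℝ) := by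
  have hn : (0 : ℝ) < Fintype.card V := by exact_mod_cast Fintype.card_pos
  rw [hreg.cutVector_dotProduct_adjMatrix_mulVec, cutVector_dotProduct_cutVector,
    div_le_iff₀ hn]
  constructor <;> intro h <;> nlinarith

theorem le_cutVector_dotProduct_adjMatrix_mulVec_iff (hreg : G.IsRegularOfDegree r)
    (A : Finset V) (lam : ℝ) :
    lam * (cutVector A ⬝ᵥ cutVector A) ≤ cutVector A ⬝ᵥ G.adjMatrix ℝ *ᵥ cutVector A ↔
      ∑ x ∈ A, (#{y ∈ Aᶜ | G.Adj x y} : ℝ) ≤ (r - lam) * #A * #Aᶜ / Fintype.card V := by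
  have hn : (0 : ℝ) < Fintype.card V := by exact_mod_cast Fintype.card_pos
  rw [hreg.cutVector_dotProduct_adjMatrix_mulVec, cutVector_dotProduct_cutVector,
    le_div_iff₀ hn]
  constructor <;> intro h <;> nlinarith

theorem cutVector_dotProduct_adjMatrix_mulVec_eq_iff (hreg : G.IsRegularOfDegree r)
    (A : Finset V) (lam : ℝ) :
    cutVector A ⬝ᵥ G.adjMatrix ℝ *ᵥ cutVector A = lam * (cutVector A ⬝ᵥ cutVector A) ↔
      ∑ x ∈ A, (#{y ∈ Aᶜ | G.Adj x y} : ℝ) = (r - lam) * #A * #Aᶜ / Fintype.card V := by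
  rw [le_antisymm_iff, le_antisymm_iff, hreg.cutVector_dotProduct_adjMatrix_mulVec_le_iff,
    hreg.le_cutVector_dotProduct_adjMatrix_mulVec_iff, and_comm]

end IsRegularOfDegree

end SimpleGraph

theorem cut_size_bounds_and_equitable_general
    {V : Type*} [Fintype V] (G : SimpleGraph V) [DecidableRel G.Adj]
    (r : ℕ) (hconn : G.Connected) (hreg : G.IsRegularOfDegree r)
    (lam1 lamk : ℝ)
    (h1max : ∀ μ : ℝ,
      (∃ g : V → ℝ, g ≠ 0 ∧ (G.adjMatrix ℝ).mulVec g = μ • g) →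
      μ ≠ (r : ℝ) → μ ≤ lam1)
    (hkmin : ∀ μ : ℝ,
      (∃ g : V → ℝ, g ≠ 0 ∧ (G.adjMatrix ℝ).mulVec g = μ • g) → lamk ≤ μ)
    (A : Finset V) (hA : A.Nonempty) (hAc : Aᶜ.Nonempty) :
    (((r : ℝ) - lam1) * A.card * Aᶜ.card / Fintype.card V
        ≤ ∑ x ∈ A, ((Aᶜ.filter fun y => G.Adj x y).card : ℝ)) ∧
    ((∑ x ∈ A, ((Aᶜ.filter fun y => G.Adj x y).card : ℝ))
        ≤ ((r : ℝ) - lamk) * A.card * Aᶜ.card / Fintype.card V) ∧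
    ((∑ x ∈ A, ((Aᶜ.filter fun y => G.Adj x y).card : ℝ))
        = ((r : ℝ) - lam1) * A.card * Aᶜ.card / Fintype.card V ↔
      ∃ q11 q12 q21 q22 : ℝ,
        (∀ x ∈ A, ((A.filter fun y => G.Adj x y).card : ℝ) = q11 ∧
                  ((Aᶜ.filter fun y => G.Adj x y).card : ℝ) = q12) ∧
        (∀ x ∈ Aᶜ, ((A.filter fun y => G.Adj x y).card : ℝ) = q21 ∧
                   ((Aᶜ.filter fun y => G.Adj x y).card : ℝ) = q22) ∧
        q11 + q22 - (r : ℝ) = lam1) ∧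
    ((∑ x ∈ A, ((Aᶜ.filter fun y => G.Adj x y).card : ℝ))
        = ((r : ℝ) - lamk) * A.card * Aᶜ.card / Fintype.card V ↔
      ∃ q11 q12 q21 q22 : ℝ,
        (∀ x ∈ A, ((A.filter fun y => G.Adj x y).card : ℝ) = q11 ∧
                  ((Aᶜ.filter fun y => G.Adj x y).card : ℝ) = q12) ∧
        (∀ x ∈ Aᶜ, ((A.filter fun y => G.Adj x y).card : ℝ) = q21 ∧
                   ((Aᶜ.filter fun y => G.Adj x y).card : ℝ) = q22) ∧
        q11 + q22 - (r : ℝ) = lamk) := by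
  have := hconn.nonempty
  have hM := G.isHermitian_adjMatrix ℝ
  have hf1 : ∀ μ g, G.adjMatrix ℝ *ᵥ g = μ • g → lam1 < μ → g ⬝ᵥ cutVector A = 0 := by
    intro μ g hg hμ
    obtain rfl | hg0 := eq_or_ne g 0
    · exact zero_dotProduct _
    obtain rfl : μ = r := by_contra fun h => hμ.not_ge (h1max μ ⟨g, hg0, hg⟩ h)
    exact hreg.dotProduct_cutVector_eq_zero hconn A hg
  have hfk : ∀ μ g, G.adjMatrix ℝ *ᵥ g = μ • g → μ < lamk → g ⬝ᵥ cutVector A = 0 := by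
    intro μ g hg hμ
    obtain rfl | hg0 := eq_or_ne g 0
    · exact zero_dotProduct _
    exact absurd (hkmin μ ⟨g, hg0, hg⟩) hμ.not_ge
  refine ⟨(hreg.cutVector_dotProduct_adjMatrix_mulVec_le_iff A lam1).1
      (hM.dotProduct_mulVec_le hf1),
    (hreg.le_cutVector_dotProduct_adjMatrix_mulVec_iff A lamk).1 (hM.le_dotProduct_mulVec hfk),
    ?_, ?_⟩
  · rw [← hreg.cutVector_dotProduct_adjMatrix_mulVec_eq_iff, hM.dotProduct_mulVec_eq_iff hf1]
    exact hreg.adjMatrix_mulVec_cutVector_eq_smul_iff hA hAc lam1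
  · rw [← hreg.cutVector_dotProduct_adjMatrix_mulVec_eq_iff, hM.eq_dotProduct_mulVec_iff hfk]
    exact hreg.adjMatrix_mulVec_cutVector_eq_smul_iff hA hAc lamk

/-- Cheeger-type two-sided bound for the cut size `e(A, Aᶜ)`, with equality
characterized by equitable partitions with eigenvalue `λ₁` resp. `λ_k`. -/
theorem cut_size_bounds_and_equitable
    {V : Type*} [Fintype V] (G : SimpleGraph V) [DecidableRel G.Adj]
    (r : ℕ) (hconn : G.Connected) (hreg : G.IsRegularOfDegree r)
    (hn : 2 ≤ Fintype.card V)
    (lam1 lamk : ℝ)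
    (h1eig : ∃ g : V → ℝ, g ≠ 0 ∧ (G.adjMatrix ℝ).mulVec g = lam1 • g)
    (h1lt : lam1 < (r : ℝ))
    (h1max : ∀ μ : ℝ,
      (∃ g : V → ℝ, g ≠ 0 ∧ (G.adjMatrix ℝ).mulVec g = μ • g) →
      μ ≠ (r : ℝ) → μ ≤ lam1)
    (hkeig : ∃ g : V → ℝ, g ≠ 0 ∧ (G.adjMatrix ℝ).mulVec g = lamk • g)
    (hkmin : ∀ μ : ℝ,
      (∃ g : V → ℝ, g ≠ 0 ∧ (G.adjMatrix ℝ).mulVec g = μ • g) → lamk ≤ μ)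
    (A : Finset V) (hA : A.Nonempty) (hAc : Aᶜ.Nonempty) :
    (((r : ℝ) - lam1) * A.card * Aᶜ.card / Fintype.card V
        ≤ ∑ x ∈ A, ((Aᶜ.filter fun y => G.Adj x y).card : ℝ)) ∧
    ((∑ x ∈ A, ((Aᶜ.filter fun y => G.Adj x y).card : ℝ))
        ≤ ((r : ℝ) - lamk) * A.card * Aᶜ.card / Fintype.card V) ∧
    ((∑ x ∈ A, ((Aᶜ.filter fun y => G.Adj x y).card : ℝ))
        = ((r : ℝ) - lam1) * A.card * Aᶜ.card / Fintype.card V ↔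
      ∃ q11 q12 q21 q22 : ℝ,
        (∀ x ∈ A, ((A.filter fun y => G.Adj x y).card : ℝ) = q11 ∧
                  ((Aᶜ.filter fun y => G.Adj x y).card : ℝ) = q12) ∧
        (∀ x ∈ Aᶜ, ((A.filter fun y => G.Adj x y).card : ℝ) = q21 ∧
                   ((Aᶜ.filter fun y => G.Adj x y).card : ℝ) = q22) ∧
        q11 + q22 - (r : ℝ) = lam1) ∧
    ((∑ x ∈ A, ((Aᶜ.filter fun y => G.Adj x y).card : ℝ))
        = ((r : ℝ) - lamk) * A.card * Aᶜ.card / Fintype.card V ↔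
      ∃ q11 q12 q21 q22 : ℝ,
        (∀ x ∈ A, ((A.filter fun y => G.Adj x y).card : ℝ) = q11 ∧
                  ((Aᶜ.filter fun y => G.Adj x y).card : ℝ) = q12) ∧
        (∀ x ∈ Aᶜ, ((A.filter fun y => G.Adj x y).card : ℝ) = q21 ∧
                   ((Aᶜ.filter fun y => G.Adj x y).card : ℝ) = q22) ∧
        q11 + q22 - (r : ℝ) = lamk) :=
  cut_size_bounds_and_equitable_general G r hconn hreg lam1 lamk h1max hkmin A hA hAc
end

section
/- Let G be a connected r-regular finite simple graph on n vertices and let λ_k be the smallest eigenvalue of its adjacency matrix. Then for every subset A ⊆ V, the cut size satisfies e(A, V∖A) ≤ (r − λ_k)·n/4. -/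
/-!
Let `a` and `b` be the indicator vectors of `A` and its complement, so `a + b = 1` and
`a - b` is the `±1` vector of the cut. For the symmetric adjacency matrix `M`,
`(a - b)ᵀ M (a - b) = 1ᵀ M 1 - 4 aᵀ M b = r n - 4 e(A, Aᶜ)`, while `M - λ_k I` is positive
semidefinite, so the same quadratic form is at least `λ_k ‖a - b‖² = λ_k n`.
-/

open Finset
open scoped Classical
open Matrix

namespace Matrix

variable {n : Type*} [Fintype n]

theorem IsSymm.sub_dotProduct_mulVec_sub {R : Type*} [CommRing R] {M : Matrix n n R}
    (hM : M.IsSymm) (a b : n → R) :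
    (a - b) ⬝ᵥ M *ᵥ (a - b) = (a + b) ⬝ᵥ M *ᵥ (a + b) - 4 * (a ⬝ᵥ M *ᵥ b) := by
  have hba : b ⬝ᵥ M *ᵥ a = a ⬝ᵥ M *ᵥ b := by
    rw [dotProduct_mulVec, ← mulVec_transpose, hM.eq, dotProduct_comm]
  simp only [mulVec_sub, mulVec_add, dotProduct_sub, dotProduct_add, sub_dotProduct,
    add_dotProduct, hba]
  ring

theorem IsHermitian.posSemidef_sub_smul_one [DecidableEq n] {M : Matrix n n ℝ}
    (hM : M.IsHermitian) {c : ℝ}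
    (hc : ∀ μ : ℝ, (∃ g : n → ℝ, g ≠ 0 ∧ M *ᵥ g = μ • g) → c ≤ μ) :
    (M - c • 1).PosSemidef := by
  have hN : (M - c • 1).IsHermitian := hM.sub (by simp [IsHermitian])
  refine hN.posSemidef_iff_eigenvalues_nonneg.mpr fun i => ?_
  set v : n → ℝ := ⇑(hN.eigenvectorBasis i)
  have hv : v ≠ 0 := fun h =>
    hN.eigenvectorBasis.orthonormal.ne_zero i (by ext x; exact congrFun h x)
  have hMv : M *ᵥ v = (hN.eigenvalues i + c) • v := by
    have := hN.mulVec_eigenvectorBasis i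
    rw [sub_mulVec, smul_mulVec, one_mulVec, sub_eq_iff_eq_add] at this
    rwa [add_smul]
  rw [Pi.zero_apply]
  linarith [hc _ ⟨v, hv, hMv⟩]

theorem IsHermitian.mul_dotProduct_self_le [DecidableEq n] {M : Matrix n n ℝ}
    (hM : M.IsHermitian) {c : ℝ}
    (hc : ∀ μ : ℝ, (∃ g : n → ℝ, g ≠ 0 ∧ M *ᵥ g = μ • g) → c ≤ μ)
    (x : n → ℝ) :
    c * (x ⬝ᵥ x) ≤ x ⬝ᵥ M *ᵥ x := by
  have := (hM.posSemidef_sub_smul_one hc).dotProduct_mulVec_nonneg x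
  simp only [star_trivial, sub_mulVec, smul_mulVec, one_mulVec, dotProduct_sub,
    dotProduct_smul, smul_eq_mul] at this
  linarith

end Matrix

namespace SimpleGraph

variable {V : Type*} [Fintype V] {G : SimpleGraph V} [DecidableRel G.Adj] {α : Type*}

variable (G) in
theorem indicator_dotProduct_adjMatrix_mulVec_indicator [NonAssocSemiring α] (A B : Finset V) :
    (A : Set V).indicator 1 ⬝ᵥ G.adjMatrix α *ᵥ (B : Set V).indicator 1
      = ∑ x ∈ A, ((B.filter fun y => G.Adj x y).card : α) := by
  simp only [dotProduct, adjMatrix_mulVec_apply, Set.indicator_apply, mem_coe, Pi.one_apply,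
    ite_mul, one_mul, zero_mul, sum_ite_mem, univ_inter]
  refine sum_congr rfl fun x _ => ?_
  rw [neighborFinset_eq_filter, filter_inter, univ_inter, sum_const, nsmul_one]

theorem IsRegularOfDegree.one_dotProduct_adjMatrix_mulVec_one [NonAssocSemiring α] {r : ℕ}
    (hreg : G.IsRegularOfDegree r) :
    (1 : V → α) ⬝ᵥ G.adjMatrix α *ᵥ 1 = Fintype.card V * r := by
  simp [dotProduct, adjMatrix_mulVec_apply, hreg.degree_eq]

end SimpleGraph

theorem Finset.indicator_sub_indicator_compl_dotProduct_self {V α : Type*} [Fintype V] [Ring α]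
    (A : Finset V) :
    ((A : Set V).indicator 1 - (↑Aᶜ : Set V).indicator 1 : V → α) ⬝ᵥ
      ((A : Set V).indicator 1 - (↑Aᶜ : Set V).indicator 1) = Fintype.card V := by
  simp only [dotProduct, Pi.sub_apply, Set.indicator_apply, mem_coe, mem_compl, Pi.one_apply]
  rw [← card_univ, card_eq_sum_ones, Nat.cast_sum]
  exact sum_congr rfl fun x _ => by split_ifs <;> simp

theorem max_cut_size_bound_general
    {V : Type*} [Fintype V] (G : SimpleGraph V) [DecidableRel G.Adj]
    (r : ℕ) (hreg : G.IsRegularOfDegree r)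
    (lamk : ℝ)
    (hkmin : ∀ μ : ℝ,
      (∃ g : V → ℝ, g ≠ 0 ∧ (G.adjMatrix ℝ).mulVec g = μ • g) → lamk ≤ μ)
    (A : Finset V) :
    (∑ x ∈ A, ((Aᶜ.filter fun y => G.Adj x y).card : ℝ))
      ≤ ((r : ℝ) - lamk) * Fintype.card V / 4 := by
  set a : V → ℝ := (A : Set V).indicator 1
  set b : V → ℝ := (↑Aᶜ : Set V).indicator 1
  have hab : a + b = 1 := by simp [a, b, coe_compl, Set.indicator_self_add_compl]
  have hquad := G.isSymm_adjMatrix.sub_dotProduct_mulVec_sub a b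
  rw [hab, hreg.one_dotProduct_adjMatrix_mulVec_one,
    G.indicator_dotProduct_adjMatrix_mulVec_indicator] at hquad
  have hspec := (G.isHermitian_adjMatrix ℝ).mul_dotProduct_self_le hkmin (a - b)
  rw [hquad, A.indicator_sub_indicator_compl_dotProduct_self] at hspec
  linarith

/-- The maximum cut size of a connected r-regular graph is at most
`(r - λ_k)·n/4`, where `λ_k` is the smallest eigenvalue. -/
theorem max_cut_size_bound
    {V : Type*} [Fintype V] (G : SimpleGraph V) [DecidableRel G.Adj]
    (r : ℕ) (hconn : G.Connected) (hreg : G.IsRegularOfDegree r)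
    (lamk : ℝ)
    (hkeig : ∃ g : V → ℝ, g ≠ 0 ∧ (G.adjMatrix ℝ).mulVec g = lamk • g)
    (hkmin : ∀ μ : ℝ,
      (∃ g : V → ℝ, g ≠ 0 ∧ (G.adjMatrix ℝ).mulVec g = μ • g) → lamk ≤ μ)
    (A : Finset V) :
    (∑ x ∈ A, ((Aᶜ.filter fun y => G.Adj x y).card : ℝ))
      ≤ ((r : ℝ) - lamk) * Fintype.card V / 4 :=
  max_cut_size_bound_general G r hreg lamk hkmin A
end

section
/- Let G be a connected r-regular finite simple graph on n ≥ 2 vertices, let λ₁ be the largest eigenvalue of the adjacency matrix M different from r (i.e., λ₁ is an eigenvalue, λ₁ < r, and every eigenvalue μ ≠ r satisfies μ ≤ λ₁), and let λ_k be the smallest eigenvalue of M. Then for every nonempty proper subset C ⊆ V: λ_k|C| + (r−λ_k)|C|²/n ≤ e(C,C) ≤ λ₁|C| + (r−λ₁)|C|²/n. Moreover, the lower bound is attained if and only if {C, V∖C} is an equitable partition with eigenvalue λ_k, and the upper bound is attained if and only if {C, V∖C} is an equitable partition with eigenvalue λ₁. -/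
open Finset Matrix
open scoped Classical

/-! Put `n = |V|` and `f = 1_C - (|C| / n) 1`. Regularity gives `f ⬝ M f = e(C,C) - r |C|² / n`
and `f ⬝ f = |C| - |C|² / n`, so the bounds say `λ_k (f ⬝ f) ≤ f ⬝ M f ≤ λ₁ (f ⬝ f)`. In an
orthonormal eigenbasis `(vᵢ)` of `M`, `f ⬝ M f - λ (f ⬝ f) = ∑ (λᵢ - λ) (vᵢ ⬝ f)²`, and `f` has no
component along the eigenvalue `r`, whose eigenvectors are constant by connectivity. This gives
both bounds, with equality exactly when `M f = λ f`. Read off vertexwise, `M f = λ f` says that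
every vertex of `C` has `λ (1 - |C| / n) + r |C| / n` neighbours in `C` and every other vertex has
`(r - λ) |C| / n`, i.e. that `{C, Cᶜ}` is equitable with eigenvalue `λ`. -/

namespace Matrix.IsHermitian

variable {n : Type*} [Fintype n] [DecidableEq n] {M : Matrix n n ℝ} (hM : M.IsHermitian)

theorem dotProduct_eq_sum_eigenvectorBasis (x y : n → ℝ) :
    x ⬝ᵥ y = ∑ i, (⇑(hM.eigenvectorBasis i) ⬝ᵥ x) * (⇑(hM.eigenvectorBasis i) ⬝ᵥ y) := by
  have := hM.eigenvectorBasis.sum_inner_mul_inner (WithLp.toLp 2 y) (WithLp.toLp 2 x)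
  simp only [EuclideanSpace.inner_eq_star_dotProduct, star_trivial] at this
  rw [← this]
  exact sum_congr rfl fun i _ => by rw [dotProduct_comm x, mul_comm]

theorem eigenvectorBasis_dotProduct_mulVec (i : n) (f : n → ℝ) :
    ⇑(hM.eigenvectorBasis i) ⬝ᵥ (M *ᵥ f) = hM.eigenvalues i * (⇑(hM.eigenvectorBasis i) ⬝ᵥ f) := by
  rw [dotProduct_mulVec, ← mulVec_transpose, ← conjTranspose_eq_transpose_of_trivial, hM.eq,
    mulVec_eigenvectorBasis, smul_dotProduct, smul_eq_mul]

theorem exists_mulVec_eq_eigenvalues_smul (i : n) :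
    ∃ g : n → ℝ, g ≠ 0 ∧ M *ᵥ g = hM.eigenvalues i • g :=
  ⟨_, fun h => hM.eigenvectorBasis.orthonormal.ne_zero i (WithLp.ofLp_injective 2 h),
    hM.mulVec_eigenvectorBasis i⟩

theorem dotProduct_mulVec_sub_mul_dotProduct_self (lam : ℝ) (f : n → ℝ) :
    f ⬝ᵥ (M *ᵥ f) - lam * (f ⬝ᵥ f) =
      ∑ i, (hM.eigenvalues i - lam) * (⇑(hM.eigenvectorBasis i) ⬝ᵥ f) ^ 2 := by
  simp only [hM.dotProduct_eq_sum_eigenvectorBasis f, eigenvectorBasis_dotProduct_mulVec,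
    mul_sum, ← sum_sub_distrib]
  exact sum_congr rfl fun i _ => by ring

theorem mulVec_eq_smul_iff {lam : ℝ} {f : n → ℝ} :
    M *ᵥ f = lam • f ↔
      ∀ i, (hM.eigenvalues i - lam) * (⇑(hM.eigenvectorBasis i) ⬝ᵥ f) ^ 2 = 0 := by
  have hcoeff : ∀ i, ⇑(hM.eigenvectorBasis i) ⬝ᵥ (M *ᵥ f - lam • f) =
      (hM.eigenvalues i - lam) * (⇑(hM.eigenvectorBasis i) ⬝ᵥ f) := fun i => by
    rw [dotProduct_sub, dotProduct_smul, eigenvectorBasis_dotProduct_mulVec, smul_eq_mul]; ring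
  have hsq : ∀ a b : ℝ, a * b ^ 2 = 0 ↔ a * b = 0 := fun a b => by simp
  simp only [hsq, ← hcoeff]
  refine ⟨fun h i => by rw [h, sub_self, dotProduct_zero], fun h => ?_⟩
  rw [← sub_eq_zero, ← dotProduct_self_eq_zero, hM.dotProduct_eq_sum_eigenvectorBasis]
  simp [h]

variable {hM}

theorem dotProduct_mulVec_le_and_eq_iff {lam : ℝ} {f : n → ℝ}
    (h : ∀ i, ⇑(hM.eigenvectorBasis i) ⬝ᵥ f ≠ 0 → hM.eigenvalues i ≤ lam) :
    f ⬝ᵥ (M *ᵥ f) ≤ lam * (f ⬝ᵥ f) ∧ (f ⬝ᵥ (M *ᵥ f) = lam * (f ⬝ᵥ f) ↔ M *ᵥ f = lam • f) := by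
  have hterm : ∀ i ∈ univ, (hM.eigenvalues i - lam) * (⇑(hM.eigenvectorBasis i) ⬝ᵥ f) ^ 2 ≤ 0 :=
    fun i _ => by
      by_cases hi : ⇑(hM.eigenvectorBasis i) ⬝ᵥ f = 0
      · simp [hi]
      · exact mul_nonpos_of_nonpos_of_nonneg (by linarith [h i hi]) (sq_nonneg _)
  rw [← sub_nonpos, ← sub_eq_zero, hM.dotProduct_mulVec_sub_mul_dotProduct_self,
    hM.mulVec_eq_smul_iff, sum_eq_zero_iff_of_nonpos hterm]
  exact ⟨sum_nonpos hterm, by simp⟩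

theorem le_dotProduct_mulVec_and_eq_iff {lam : ℝ} {f : n → ℝ}
    (h : ∀ i, ⇑(hM.eigenvectorBasis i) ⬝ᵥ f ≠ 0 → lam ≤ hM.eigenvalues i) :
    lam * (f ⬝ᵥ f) ≤ f ⬝ᵥ (M *ᵥ f) ∧ (f ⬝ᵥ (M *ᵥ f) = lam * (f ⬝ᵥ f) ↔ M *ᵥ f = lam • f) := by
  have hterm : ∀ i ∈ univ, 0 ≤ (hM.eigenvalues i - lam) * (⇑(hM.eigenvectorBasis i) ⬝ᵥ f) ^ 2 :=
    fun i _ => by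
      by_cases hi : ⇑(hM.eigenvectorBasis i) ⬝ᵥ f = 0
      · simp [hi]
      · exact mul_nonneg (by linarith [h i hi]) (sq_nonneg _)
  rw [← sub_nonneg, ← sub_eq_zero, hM.dotProduct_mulVec_sub_mul_dotProduct_self,
    hM.mulVec_eq_smul_iff, sum_eq_zero_iff_of_nonneg hterm]
  exact ⟨sum_nonneg hterm, by simp⟩

end Matrix.IsHermitian

/-- The orthogonal projection of `1_C` onto the complement of the constant vectors. -/
noncomputable def centeredIndicator {V : Type*} [Fintype V] (C : Finset V) : V → ℝ :=
  fun x => (if x ∈ C then 1 else 0) - #C / Fintype.card V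

section

variable {V : Type*} [Fintype V]

theorem sum_centeredIndicator (C : Finset V) : ∑ x, centeredIndicator C x = 0 := by
  have hC : (Fintype.card V : ℝ) = 0 → (#C : ℝ) = 0 := fun h => by
    have := C.card_le_univ; norm_cast at h ⊢; omega
  simp [centeredIndicator, sum_sub_distrib, mul_div_cancel_of_imp' hC]

theorem sum_centeredIndicator_mul (C : Finset V) (u : V → ℝ) :
    ∑ x, centeredIndicator C x * u x = ∑ x ∈ C, u x - #C / Fintype.card V * ∑ x, u x := by
  simp [centeredIndicator, sub_mul, sum_sub_distrib, mul_sum]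

theorem centeredIndicator_dotProduct_self (C : Finset V) :
    centeredIndicator C ⬝ᵥ centeredIndicator C = #C - (#C : ℝ) ^ 2 / Fintype.card V := by
  rw [dotProduct, sum_centeredIndicator_mul, sum_centeredIndicator]
  simp [centeredIndicator]
  ring

end

namespace SimpleGraph

variable {V : Type*} [Fintype V] {G : SimpleGraph V} [DecidableRel G.Adj] {r : ℕ}

theorem IsRegularOfDegree.card_filter_adj_add_card_filter_adj_compl_s9 (hreg : G.IsRegularOfDegree r)
    (C : Finset V) (x : V) : #(C.filter (G.Adj x)) + #(Cᶜ.filter (G.Adj x)) = r := by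
  rw [← card_union_of_disjoint (disjoint_filter_filter disjoint_compl_right), ← filter_union,
    union_compl, ← neighborFinset_eq_filter, card_neighborFinset_eq_degree, hreg x]

theorem IsRegularOfDegree.sum_card_filter_adj (hreg : G.IsRegularOfDegree r) (C : Finset V) :
    ∑ x, #(C.filter (G.Adj x)) = r * #C := by
  have := sum_card_bipartiteAbove_eq_sum_card_bipartiteBelow (s := univ) (t := C) (r := G.Adj)
  simp only [bipartiteAbove, bipartiteBelow] at this
  rw [this, sum_const_nat fun y _ => ?_, mul_comm]
  simp_rw [G.adj_comm _ y]
  rw [← neighborFinset_eq_filter, card_neighborFinset_eq_degree, hreg y]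

theorem IsRegularOfDegree.adjMatrix_mulVec_centeredIndicator_apply (hreg : G.IsRegularOfDegree r)
    (C : Finset V) (x : V) :
    (G.adjMatrix ℝ *ᵥ centeredIndicator C) x =
      #(C.filter (G.Adj x)) - r * (#C / Fintype.card V) := by
  simp only [adjMatrix_mulVec_apply, centeredIndicator, sum_sub_distrib, sum_boole, sum_const,
    card_neighborFinset_eq_degree, hreg x, nsmul_eq_mul]
  congr 3
  ext y
  simp [and_comm]

theorem IsRegularOfDegree.centeredIndicator_dotProduct_adjMatrix_mulVec
    (hreg : G.IsRegularOfDegree r) (C : Finset V) :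
    centeredIndicator C ⬝ᵥ (G.adjMatrix ℝ *ᵥ centeredIndicator C) =
      ∑ x ∈ C, (#(C.filter (G.Adj x)) : ℝ) - r * #C ^ 2 / Fintype.card V := by
  have hsum : ∑ x, (#(C.filter (G.Adj x)) : ℝ) = r * #C := by
    exact_mod_cast hreg.sum_card_filter_adj C
  simp only [dotProduct, hreg.adjMatrix_mulVec_centeredIndicator_apply, mul_sub,
    sum_sub_distrib, ← sum_mul, sum_centeredIndicator, zero_mul, sub_zero,
    sum_centeredIndicator_mul, hsum]
  ring

theorem IsRegularOfDegree.sum_card_filter_adj_eq_add (hreg : G.IsRegularOfDegree r) (C : Finset V)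
    (lam : ℝ) :
    ∑ x ∈ C, (#(C.filter (G.Adj x)) : ℝ) =
      lam * #C + (r - lam) * #C ^ 2 / Fintype.card V +
        (centeredIndicator C ⬝ᵥ (G.adjMatrix ℝ *ᵥ centeredIndicator C) -
          lam * (centeredIndicator C ⬝ᵥ centeredIndicator C)) := by
  rw [hreg.centeredIndicator_dotProduct_adjMatrix_mulVec, centeredIndicator_dotProduct_self]
  ring

theorem Connected.apply_eq_of_adjMatrix_mulVec_eq_smul (hconn : G.Connected)
    (hreg : G.IsRegularOfDegree r) {w : V → ℝ} (hw : G.adjMatrix ℝ *ᵥ w = (r : ℝ) • w)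
    (x y : V) : w x = w y := by
  refine (lapMatrix_mulVec_eq_zero_iff_forall_reachable G).mp ?_ x y (hconn.preconnected x y)
  ext v
  rw [lapMatrix_mulVec_apply, ← adjMatrix_mulVec_apply, hw, hreg v]
  simp

theorem Connected.dotProduct_centeredIndicator_eq_zero (hconn : G.Connected)
    (hreg : G.IsRegularOfDegree r) {w : V → ℝ} (hw : G.adjMatrix ℝ *ᵥ w = (r : ℝ) • w)
    (C : Finset V) : w ⬝ᵥ centeredIndicator C = 0 := by
  obtain ⟨v⟩ := hconn.nonempty
  simp only [dotProduct, hconn.apply_eq_of_adjMatrix_mulVec_eq_smul hreg hw _ v, ← mul_sum,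
    sum_centeredIndicator, mul_zero]

/-- `{C, Cᶜ}` is an equitable partition of `G` with eigenvalue `μ`; `r` is the degree of `G`. -/
def IsEquitableWith (G : SimpleGraph V) [DecidableRel G.Adj] (r : ℕ) (C : Finset V) (μ : ℝ) :
    Prop :=
  ∃ q11 q12 q21 q22 : ℝ,
    (∀ x ∈ C, (#(C.filter (G.Adj x)) : ℝ) = q11 ∧ (#(Cᶜ.filter (G.Adj x)) : ℝ) = q12) ∧
    (∀ x ∈ Cᶜ, (#(C.filter (G.Adj x)) : ℝ) = q21 ∧ (#(Cᶜ.filter (G.Adj x)) : ℝ) = q22) ∧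
    q11 + q22 - r = μ

theorem IsRegularOfDegree.adjMatrix_mulVec_centeredIndicator_eq_smul_iff
    (hreg : G.IsRegularOfDegree r) {C : Finset V} (hCc : Cᶜ.Nonempty) (μ : ℝ) :
    G.adjMatrix ℝ *ᵥ centeredIndicator C = μ • centeredIndicator C ↔ G.IsEquitableWith r C μ := by
  have hdeg : ∀ x, (#(C.filter (G.Adj x)) : ℝ) + #(Cᶜ.filter (G.Adj x)) = r := fun x => by
    exact_mod_cast hreg.card_filter_adj_add_card_filter_adj_compl_s9 C x
  simp only [funext_iff, hreg.adjMatrix_mulVec_centeredIndicator_apply, Pi.smul_apply,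
    centeredIndicator, smul_eq_mul]
  constructor
  · intro h
    refine ⟨μ * (1 - #C / Fintype.card V) + r * (#C / Fintype.card V),
      r - (μ * (1 - #C / Fintype.card V) + r * (#C / Fintype.card V)),
      (r - μ) * (#C / Fintype.card V), r - (r - μ) * (#C / Fintype.card V),
      fun x hx => ?_, fun x hx => ?_, by ring⟩
    · have hx' := h x
      simp only [hx, if_true] at hx'
      exact ⟨by linarith, by linarith [hdeg x]⟩
    · have hx' := h x
      simp only [mem_compl.mp hx, if_false] at hx'
      exact ⟨by linarith, by linarith [hdeg x]⟩
  · rintro ⟨q11, q12, q21, q22, hC, hCc', rfl⟩ x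
    obtain ⟨y, hy⟩ := hCc
    have hq2 : q21 + q22 = r := by rw [← (hCc' y hy).1, ← (hCc' y hy).2, hdeg]
    have hn : (Fintype.card V : ℝ) ≠ 0 := Nat.cast_ne_zero.mpr (Fintype.card_pos_iff.mpr ⟨y⟩).ne'
    have hcount : #C * q11 + (Fintype.card V - #C) * q21 = r * #C := by
      have hsum : ∑ x, (#(C.filter (G.Adj x)) : ℝ) = r * #C := by
        exact_mod_cast hreg.sum_card_filter_adj C
      rw [← sum_add_sum_compl C, sum_congr rfl fun x hx => (hC x hx).1,
        sum_congr rfl fun x hx => (hCc' x hx).1] at hsum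
      simpa [card_compl, Nat.cast_sub C.card_le_univ] using hsum
    by_cases hx : x ∈ C
    · simp only [hx, if_true, (hC x hx).1]
      field_simp
      linear_combination hcount - (Fintype.card V - #C : ℝ) * hq2
    · simp only [hx, if_false, (hCc' x (mem_compl.mpr hx)).1]
      field_simp
      linear_combination hcount + (#C : ℝ) * hq2

end SimpleGraph

theorem internal_edges_bounds_and_equitable_general
    {V : Type*} [Fintype V] (G : SimpleGraph V) [DecidableRel G.Adj]
    (r : ℕ) (hconn : G.Connected) (hreg : G.IsRegularOfDegree r)
    (lam1 lamk : ℝ)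
    (h1max : ∀ μ : ℝ,
      (∃ g : V → ℝ, g ≠ 0 ∧ (G.adjMatrix ℝ).mulVec g = μ • g) →
      μ ≠ (r : ℝ) → μ ≤ lam1)
    (hkmin : ∀ μ : ℝ,
      (∃ g : V → ℝ, g ≠ 0 ∧ (G.adjMatrix ℝ).mulVec g = μ • g) → lamk ≤ μ)
    (C : Finset V) (hCc : Cᶜ.Nonempty) :
    (lamk * C.card + ((r : ℝ) - lamk) * C.card ^ 2 / Fintype.card V
        ≤ ∑ x ∈ C, ((C.filter fun y => G.Adj x y).card : ℝ)) ∧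
    ((∑ x ∈ C, ((C.filter fun y => G.Adj x y).card : ℝ))
        ≤ lam1 * C.card + ((r : ℝ) - lam1) * C.card ^ 2 / Fintype.card V) ∧
    ((∑ x ∈ C, ((C.filter fun y => G.Adj x y).card : ℝ))
        = lamk * C.card + ((r : ℝ) - lamk) * C.card ^ 2 / Fintype.card V ↔
      ∃ q11 q12 q21 q22 : ℝ,
        (∀ x ∈ C, ((C.filter fun y => G.Adj x y).card : ℝ) = q11 ∧
                  ((Cᶜ.filter fun y => G.Adj x y).card : ℝ) = q12) ∧
        (∀ x ∈ Cᶜ, ((C.filter fun y => G.Adj x y).card : ℝ) = q21 ∧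
                   ((Cᶜ.filter fun y => G.Adj x y).card : ℝ) = q22) ∧
        q11 + q22 - (r : ℝ) = lamk) ∧
    ((∑ x ∈ C, ((C.filter fun y => G.Adj x y).card : ℝ))
        = lam1 * C.card + ((r : ℝ) - lam1) * C.card ^ 2 / Fintype.card V ↔
      ∃ q11 q12 q21 q22 : ℝ,
        (∀ x ∈ C, ((C.filter fun y => G.Adj x y).card : ℝ) = q11 ∧
                  ((Cᶜ.filter fun y => G.Adj x y).card : ℝ) = q12) ∧
        (∀ x ∈ Cᶜ, ((C.filter fun y => G.Adj x y).card : ℝ) = q21 ∧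
                   ((Cᶜ.filter fun y => G.Adj x y).card : ℝ) = q22) ∧
        q11 + q22 - (r : ℝ) = lam1) := by
  have hM := G.isHermitian_adjMatrix ℝ
  have h1 : ∀ i, ⇑(hM.eigenvectorBasis i) ⬝ᵥ centeredIndicator C ≠ 0 →
      hM.eigenvalues i ≤ lam1 := fun i hi =>
    h1max _ (hM.exists_mulVec_eq_eigenvalues_smul i) fun hr =>
      hi (hconn.dotProduct_centeredIndicator_eq_zero hreg (hr ▸ hM.mulVec_eigenvectorBasis i) C)
  have hk : ∀ i, ⇑(hM.eigenvectorBasis i) ⬝ᵥ centeredIndicator C ≠ 0 →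
      lamk ≤ hM.eigenvalues i := fun i _ =>
    hkmin _ (hM.exists_mulVec_eq_eigenvalues_smul i)
  obtain ⟨hle1, heq1⟩ := Matrix.IsHermitian.dotProduct_mulVec_le_and_eq_iff h1
  obtain ⟨hlek, heqk⟩ := Matrix.IsHermitian.le_dotProduct_mulVec_and_eq_iff hk
  have hequit := hreg.adjMatrix_mulVec_centeredIndicator_eq_smul_iff hCc
  refine ⟨?_, ?_, ?_, ?_⟩
  · rw [hreg.sum_card_filter_adj_eq_add C lamk]
    exact le_add_of_nonneg_right (sub_nonneg.mpr hlek)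
  · rw [hreg.sum_card_filter_adj_eq_add C lam1]
    exact add_le_of_nonpos_right (sub_nonpos.mpr hle1)
  · rw [hreg.sum_card_filter_adj_eq_add C lamk, add_eq_left, sub_eq_zero, heqk, hequit]
    exact Iff.rfl
  · rw [hreg.sum_card_filter_adj_eq_add C lam1, add_eq_left, sub_eq_zero, heq1, hequit]
    exact Iff.rfl

/-- Haemers-type two-sided bound for `e(C,C)`, with equality characterized by
equitable partitions with eigenvalue `λ_k` resp. `λ₁`. -/
theorem internal_edges_bounds_and_equitable
    {V : Type*} [Fintype V] (G : SimpleGraph V) [DecidableRel G.Adj]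
    (r : ℕ) (hconn : G.Connected) (hreg : G.IsRegularOfDegree r)
    (hn : 2 ≤ Fintype.card V)
    (lam1 lamk : ℝ)
    (h1eig : ∃ g : V → ℝ, g ≠ 0 ∧ (G.adjMatrix ℝ).mulVec g = lam1 • g)
    (h1lt : lam1 < (r : ℝ))
    (h1max : ∀ μ : ℝ,
      (∃ g : V → ℝ, g ≠ 0 ∧ (G.adjMatrix ℝ).mulVec g = μ • g) →
      μ ≠ (r : ℝ) → μ ≤ lam1)
    (hkeig : ∃ g : V → ℝ, g ≠ 0 ∧ (G.adjMatrix ℝ).mulVec g = lamk • g)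
    (hkmin : ∀ μ : ℝ,
      (∃ g : V → ℝ, g ≠ 0 ∧ (G.adjMatrix ℝ).mulVec g = μ • g) → lamk ≤ μ)
    (C : Finset V) (hC : C.Nonempty) (hCc : Cᶜ.Nonempty) :
    (lamk * C.card + ((r : ℝ) - lamk) * C.card ^ 2 / Fintype.card V
        ≤ ∑ x ∈ C, ((C.filter fun y => G.Adj x y).card : ℝ)) ∧
    ((∑ x ∈ C, ((C.filter fun y => G.Adj x y).card : ℝ))
        ≤ lam1 * C.card + ((r : ℝ) - lam1) * C.card ^ 2 / Fintype.card V) ∧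
    ((∑ x ∈ C, ((C.filter fun y => G.Adj x y).card : ℝ))
        = lamk * C.card + ((r : ℝ) - lamk) * C.card ^ 2 / Fintype.card V ↔
      ∃ q11 q12 q21 q22 : ℝ,
        (∀ x ∈ C, ((C.filter fun y => G.Adj x y).card : ℝ) = q11 ∧
                  ((Cᶜ.filter fun y => G.Adj x y).card : ℝ) = q12) ∧
        (∀ x ∈ Cᶜ, ((C.filter fun y => G.Adj x y).card : ℝ) = q21 ∧
                   ((Cᶜ.filter fun y => G.Adj x y).card : ℝ) = q22) ∧
        q11 + q22 - (r : ℝ) = lamk) ∧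
    ((∑ x ∈ C, ((C.filter fun y => G.Adj x y).card : ℝ))
        = lam1 * C.card + ((r : ℝ) - lam1) * C.card ^ 2 / Fintype.card V ↔
      ∃ q11 q12 q21 q22 : ℝ,
        (∀ x ∈ C, ((C.filter fun y => G.Adj x y).card : ℝ) = q11 ∧
                  ((Cᶜ.filter fun y => G.Adj x y).card : ℝ) = q12) ∧
        (∀ x ∈ Cᶜ, ((C.filter fun y => G.Adj x y).card : ℝ) = q21 ∧
                   ((Cᶜ.filter fun y => G.Adj x y).card : ℝ) = q22) ∧
        q11 + q22 - (r : ℝ) = lam1) :=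
  internal_edges_bounds_and_equitable_general G r hconn hreg lam1 lamk h1max hkmin C hCc
end
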